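/- arXiv:1211.1783 — 3 statements merged into one kernel-verified Lean document; each statement's English description precedes it below -/
import Mathlib

section
/- Let n ≥ 1, k ≥ 0 be natural numbers and (a_1, ..., a_n) natural numbers with a_1 + ... + a_n ≤ k, and set a_0 = k - (a_1 + ... + a_n). Then (1/π^n) ∫_{ℂ^n} (∏_{i=1}^n |z_i|^{2 a_i}) / (1 + Σ_{i=1}^n |z_i|²)^{k+n+1} dλ(z) = (a_0! · a_1! ⋯ a_n!) / (k+n)!. -/
/-!
Write `(1 + ‖z‖²)^{-(N+1)} = (1/N!) ∫₀^∞ t^N e^{-t(1 + ‖z‖²)} dt` with `N = k + n`. After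
exchanging the two integrals (Tonelli), the `z`-integral splits into one-dimensional Gaussian
moments `∫_ℂ |w|^{2a} e^{-t|w|²} = π a! / t^{a+1}`, and what is left is the Gamma integral
`∫₀^∞ t^{k - Σ aᵢ} e^{-t} dt = (k - Σ aᵢ)!`.
-/

open MeasureTheory Real Set
open scoped Nat

theorem integral_pow_mul_exp_neg_mul_Ioi (m : ℕ) {r : ℝ} (hr : 0 < r) :
    ∫ t in Ioi (0 : ℝ), t ^ m * rexp (-(r * t)) = m ! / r ^ (m + 1) := by
  have h := integral_rpow_mul_exp_neg_mul_Ioi (a := m + 1) (by positivity) hr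
  rw [add_sub_cancel_right, Gamma_nat_eq_factorial] at h
  rw [← setIntegral_congr_fun measurableSet_Ioi fun t _ => by rw [← rpow_natCast], h,
    ← Nat.cast_add_one, rpow_natCast, div_pow, one_pow, one_div_mul_eq_div]

theorem Complex.integral_norm_pow_mul_exp_neg_mul_sq (a : ℕ) {t : ℝ} (ht : 0 < t) :
    ∫ w : ℂ, ‖w‖ ^ (2 * a) * rexp (-(t * ‖w‖ ^ 2)) = π * a ! / t ^ (a + 1) := by
  have h := Complex.integral_rpow_mul_exp_neg_mul_rpow (p := 2) (q := 2 * a) one_le_two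
    (by linarith [a.cast_nonneg (α := ℝ)]) ht
  rw [neg_div, show ((2 : ℝ) * a + 2) / 2 = a + 1 by ring, Real.Gamma_nat_eq_factorial,
    rpow_neg ht.le, ← Nat.cast_add_one, rpow_natCast] at h
  simp_rw [rpow_two] at h
  simp_rw [← rpow_natCast ‖_‖ (2 * a), Nat.cast_mul, Nat.cast_ofNat, ← neg_mul, h]
  field_simp

theorem lintegral_ofReal_eq_of_integral_eq_of_pos {α : Type*} [MeasurableSpace α]
    {μ : Measure α} {f : α → ℝ} {v : ℝ} (hf : 0 ≤ᵐ[μ] f) (h : ∫ x, f x ∂μ = v) (hv : 0 < v) :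
    ∫⁻ x, ENNReal.ofReal (f x) ∂μ = ENNReal.ofReal v := by
  rw [← h, ofReal_integral_eq_lintegral_ofReal (.of_integral_ne_zero (h ▸ hv.ne')) hf]

theorem ofReal_inv_pow_eq_lintegral (m : ℕ) {X : ℝ} (hX : 0 < X) :
    ENNReal.ofReal (X ^ (m + 1))⁻¹ =
      ∫⁻ t in Ioi 0, ENNReal.ofReal ((m ! : ℝ)⁻¹ * (t ^ m * rexp (-(X * t)))) := by
  refine (lintegral_ofReal_eq_of_integral_eq_of_pos ?_ ?_ (by positivity)).symm
  · filter_upwards [ae_restrict_mem measurableSet_Ioi] with t (ht : 0 < t)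
    positivity
  · rw [integral_const_mul, integral_pow_mul_exp_neg_mul_Ioi m hX]
    field_simp

section Fintype

variable {ι : Type*} [Fintype ι]

theorem exp_neg_one_add_sum_mul (t : ℝ) (x : ι → ℝ) :
    rexp (-((1 + ∑ i, x i) * t)) = rexp (-t) * ∏ i, rexp (-(t * x i)) := by
  rw [← exp_sum, ← exp_add, Finset.sum_neg_distrib, add_mul, one_mul, Finset.sum_mul, neg_add]
  simp_rw [mul_comm (x _)]

theorem integral_prod_norm_pow_mul_exp_neg_mul_sq (a : ι → ℕ) {t : ℝ} (ht : 0 < t) :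
    ∫ z : ι → ℂ, ∏ i, ‖z i‖ ^ (2 * a i) * rexp (-(t * ‖z i‖ ^ 2)) =
      π ^ Fintype.card ι * (∏ i, (a i)! : ℝ) / t ^ (∑ i, a i + Fintype.card ι) := by
  rw [integral_fintype_prod_volume_eq_prod
    (fun i (w : ℂ) => ‖w‖ ^ (2 * a i) * rexp (-(t * ‖w‖ ^ 2)))]
  simp_rw [Complex.integral_norm_pow_mul_exp_neg_mul_sq _ ht, Finset.prod_div_distrib,
    Finset.prod_mul_distrib, Finset.prod_const, Finset.prod_pow_eq_pow_sum,
    Finset.sum_add_distrib, Finset.sum_const, smul_eq_mul, mul_one, Finset.card_univ]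

theorem lintegral_prod_norm_pow_div_one_add_sum_sq_pow (a : ι → ℕ) (b : ℕ) :
    ∫⁻ z : ι → ℂ, ENNReal.ofReal ((∏ i, ‖z i‖ ^ (2 * a i)) /
        (1 + ∑ i, ‖z i‖ ^ 2) ^ (∑ i, a i + b + Fintype.card ι + 1)) =
      ENNReal.ofReal (π ^ Fintype.card ι * (∏ i, (a i)! : ℝ) * b ! /
        (∑ i, a i + b + Fintype.card ι)!) := by
  set N := ∑ i, a i + b + Fintype.card ι
  set G : (ι → ℂ) → ℝ → ENNReal := fun z t => ENNReal.ofReal ((N ! : ℝ)⁻¹ *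
    (t ^ N * rexp (-t)) * ∏ i, ‖z i‖ ^ (2 * a i) * rexp (-(t * ‖z i‖ ^ 2))) with hG
  have hlaplace (z : ι → ℂ) : ENNReal.ofReal ((∏ i, ‖z i‖ ^ (2 * a i)) /
      (1 + ∑ i, ‖z i‖ ^ 2) ^ (N + 1)) = ∫⁻ t in Ioi 0, G z t := by
    rw [div_eq_mul_inv, ENNReal.ofReal_mul (by positivity),
      ofReal_inv_pow_eq_lintegral N (by positivity),
      ← lintegral_const_mul' _ _ ENNReal.ofReal_ne_top]
    refine lintegral_congr fun t => ?_
    rw [← ENNReal.ofReal_mul (by positivity), exp_neg_one_add_sum_mul]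
    simp only [hG, Finset.prod_mul_distrib]
    congr 1
    ring
  have hgauss : ∀ t ∈ Ioi (0 : ℝ), ∫⁻ z, G z t = ENNReal.ofReal
      ((N ! : ℝ)⁻¹ * π ^ Fintype.card ι * (∏ i, (a i)! : ℝ) * (t ^ b * rexp (-(1 * t)))) := by
    intro t (ht : 0 < t)
    refine lintegral_ofReal_eq_of_integral_eq_of_pos (.of_forall fun z => by positivity) ?_
      (by positivity)
    rw [integral_const_mul, integral_prod_norm_pow_mul_exp_neg_mul_sq a ht]
    field_simp
    ring
  have hG_meas : Measurable (Function.uncurry G) := by fun_prop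
  calc _ = ∫⁻ z, ∫⁻ t in Ioi 0, G z t := lintegral_congr hlaplace
    _ = ∫⁻ t in Ioi 0, ∫⁻ z, G z t := lintegral_lintegral_swap hG_meas.aemeasurable
    _ = _ := setLIntegral_congr_fun measurableSet_Ioi hgauss
    _ = _ := by
      refine lintegral_ofReal_eq_of_integral_eq_of_pos ?_ ?_ (by positivity)
      · filter_upwards [ae_restrict_mem measurableSet_Ioi] with t (ht : 0 < t)
        positivity
      · rw [integral_const_mul, integral_pow_mul_exp_neg_mul_Ioi b one_pos, one_pow]
        field_simp

end Fintype

theorem fubini_study_L2_norm_Pn_general (n : ℕ) (k : ℕ) (a : Fin n → ℕ)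
    (ha : ∑ i, a i ≤ k) :
    (1 / Real.pi ^ n) *
        ∫ z : Fin n → ℂ,
          (∏ i, ‖z i‖ ^ (2 * a i)) /
            (1 + ∑ i, ‖z i‖ ^ 2) ^ (k + n + 1) =
      (((k - ∑ i, a i).factorial : ℝ) * ∏ i, ((a i).factorial : ℝ)) / (k + n).factorial := by
  obtain ⟨b, rfl⟩ := Nat.exists_eq_add_of_le ha
  have h := lintegral_prod_norm_pow_div_one_add_sum_sq_pow a b
  rw [Fintype.card_fin] at h
  have hmeas : Measurable fun z : Fin n → ℂ =>
      (∏ i, ‖z i‖ ^ (2 * a i)) / (1 + ∑ i, ‖z i‖ ^ 2) ^ (∑ i, a i + b + n + 1) := by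
    fun_prop
  rw [integral_eq_lintegral_of_nonneg_ae (.of_forall fun z => by positivity)
      hmeas.aestronglyMeasurable, h, ENNReal.toReal_ofReal (by positivity),
    Nat.add_sub_cancel_left]
  field_simp

/-- Fubini–Study `L²` norms of monomial sections of `O(k)` on `ℙⁿ`:
`(1/πⁿ) ∫_{ℂⁿ} (∏ |z_i|^(2aᵢ)) / (1 + Σ |z_i|²)^(k+n+1) dλ = a₀!·a₁!⋯aₙ!/(k+n)!`,
where `a₀ = k - (a₁ + ⋯ + aₙ)`. -/
theorem fubini_study_L2_norm_Pn (n : ℕ) (hn : 1 ≤ n) (k : ℕ) (a : Fin n → ℕ)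
    (ha : ∑ i, a i ≤ k) :
    (1 / Real.pi ^ n) *
        ∫ z : Fin n → ℂ,
          (∏ i, ‖z i‖ ^ (2 * a i)) /
            (1 + ∑ i, ‖z i‖ ^ 2) ^ (k + n + 1) =
      (((k - ∑ i, a i).factorial : ℝ) * ∏ i, ((a i).factorial : ℝ)) / (k + n).factorial :=
  fubini_study_L2_norm_Pn_general n k a ha
end

section
/- In the setting of the previous statement (f : X → Y, N_f the normal directions, f* the pullback of conical sets), if N_f ∩ (S ∪ S' ∪ (S + S')) = ∅ and S ∩ (-S') = ∅, then f*S ∩ (-f*S') = ∅, where -S' = {(y, -ξ) : (y, ξ) ∈ S'}. -/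
/-- The set of normal directions of `f`: pairs `(f x, ξ)` with `ξ ≠ 0` and `df_x^t ξ = 0`. -/
def normalDirs {X Y V W : Type*} [AddCommGroup V] [AddCommGroup W]
    (f : X → Y) (dft : X → W →+ V) : Set (Y × W) :=
  {p | ∃ x ξ, ξ ≠ 0 ∧ dft x ξ = 0 ∧ p = (f x, ξ)}

/-- Pullback of a conical subset: `f*S = {(x, df_x^t ξ) : (f x, ξ) ∈ S}`. -/
def pullSet {X Y V W : Type*} [AddCommGroup V] [AddCommGroup W]
    (f : X → Y) (dft : X → W →+ V) (S : Set (Y × W)) : Set (X × V) :=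
  {q | ∃ x ξ, (f x, ξ) ∈ S ∧ q = (x, dft x ξ)}

/-- Fiberwise sum of two conical subsets, keeping only nonzero covectors. -/
def sumSet {Z U : Type*} [AddCommGroup U] (S T : Set (Z × U)) : Set (Z × U) :=
  {p | ∃ z ξ η, (z, ξ) ∈ S ∧ (z, η) ∈ T ∧ ξ + η ≠ 0 ∧ p = (z, ξ + η)}

/-- Fiberwise negation: `-S = {(z, -ξ) : (z, ξ) ∈ S}`. -/
def negSet {Z U : Type*} [AddCommGroup U] (S : Set (Z × U)) : Set (Z × U) :=
  {p | ∃ z ξ, (z, ξ) ∈ S ∧ p = (z, -ξ)}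

/-- If `N_f ∩ (S ∪ S' ∪ (S + S')) = ∅` and `S ∩ (-S') = ∅`, then
`f*S ∩ (-f*S') = ∅`: the Hörmander condition is preserved by pullback. -/
theorem pullSet_inter_neg_pullSet_eq_empty {X Y V W : Type*}
    [AddCommGroup V] [AddCommGroup W]
    (f : X → Y) (dft : X → W →+ V) (S S' : Set (Y × W))
    (hS : ∀ p ∈ S, p.2 ≠ 0) (hS' : ∀ p ∈ S', p.2 ≠ 0)
    (hN : normalDirs f dft ∩ (S ∪ S' ∪ sumSet S S') = ∅)
    (hdisj : S ∩ negSet S' = ∅) :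
    pullSet f dft S ∩ negSet (pullSet f dft S') = ∅ := by
  ext q
  simp only [Set.mem_inter_iff, Set.mem_empty_iff_false, iff_false]
  rintro ⟨⟨x, ξ, hξS, rfl⟩, ⟨z, η, ⟨x, ξ', hξ'S', hzη⟩, heq⟩⟩
  obtain ⟨rfl, rfl⟩ := Prod.mk.injEq .. ▸ hzη
  obtain ⟨rfl, hv⟩ := Prod.mk.injEq .. ▸ heq
  by_cases hsum : ξ + ξ' = 0
  · have hξeq : ξ = -ξ' := eq_neg_of_add_eq_zero_left hsum
    have : (f x, ξ) ∈ S ∩ negSet S' :=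
      ⟨hξS, f x, ξ', hξ'S', by rw [hξeq]⟩
    rw [hdisj] at this
    exact this
  · have hmem : (f x, ξ + ξ') ∈ normalDirs f dft ∩ (S ∪ S' ∪ sumSet S S') := by
      refine ⟨⟨x, ξ + ξ', hsum, ?_, rfl⟩, Or.inr ⟨f x, ξ, ξ', hξS, hξ'S', hsum, rfl⟩⟩
      rw [map_add, hv, neg_add_cancel]
    rw [hN] at hmem
    exact hmem
end

section
/- Let f : X → Y be a map with fiberwise linear transposes df_x^t as above, N_f = {(f(x), ξ) : ξ ≠ 0, df_x^t ξ = 0}. For a conical subset S of T_0*X define the pushforward f_*S = {(f(x), ξ) : (x, df_x^t ξ) ∈ S} ∪ N_f, and for a conical subset S' of T_0*Y with N_f ∩ S' = ∅ define f*S' = {(x, df_x^t ξ) : (f(x), ξ) ∈ S'}. Then f_*( S ∪ f*S' ∪ (S + f*S') ) ⊆ f_*S ∪ S' ∪ (f_*S + S'). -/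
/-- Pushforward of a conical subset:
`f_*S = {(f x, ξ) : (x, df_x^t ξ) ∈ S} ∪ N_f`. -/
def pushSet {X Y V W : Type*} [AddCommGroup V] [AddCommGroup W]
    (f : X → Y) (dft : X → W →+ V) (S : Set (X × V)) : Set (Y × W) :=
  {p | ∃ x ξ, (x, dft x ξ) ∈ S ∧ p = (f x, ξ)} ∪ normalDirs f dft

/-- Projection-formula inclusion for wave front sets:
`f_*(S ∪ f*S' ∪ (S + f*S')) ⊆ f_*S ∪ S' ∪ (f_*S + S')` whenever `N_f ∩ S' = ∅`. -/
theorem pushSet_union_pull_union_sum_subset {X Y V W : Type*}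
    [AddCommGroup V] [AddCommGroup W]
    (f : X → Y) (dft : X → W →+ V) (S : Set (X × V)) (S' : Set (Y × W))
    (hS : ∀ p ∈ S, p.2 ≠ 0) (hS' : ∀ p ∈ S', p.2 ≠ 0)
    (hN : normalDirs f dft ∩ S' = ∅) :
    pushSet f dft (S ∪ pullSet f dft S' ∪ sumSet S (pullSet f dft S')) ⊆
      pushSet f dft S ∪ S' ∪ sumSet (pushSet f dft S) S' := by

  rintro p hp
  rcases hp with ⟨x, ξ, hmem, rfl⟩ | hNf
  · rcases hmem with (hS1 | hpull) | hsum
    · -- (x, dft x ξ) ∈ S : goes to pushSet S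
      exact Or.inl (Or.inl (Or.inl ⟨x, ξ, hS1, rfl⟩))
    · -- pullSet case
      obtain ⟨x', ξ', hS'mem, heq⟩ := hpull
      obtain ⟨hx, hξ⟩ := Prod.mk.injEq .. ▸ heq
      subst hx
      by_cases hξξ' : ξ = ξ'
      · subst hξξ'; exact Or.inl (Or.inr hS'mem)
      · have hξne : ξ ≠ 0 := by
          rintro rfl
          have h0 : dft x ξ' = 0 := by simpa using hξ.symm
          have : (f x, ξ') ∈ normalDirs f dft ∩ S' :=
            ⟨⟨x, ξ', hS' _ hS'mem, h0, rfl⟩, hS'mem⟩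
          simp [hN] at this
        refine Or.inr ⟨f x, ξ - ξ', ξ', ?_, hS'mem, by simpa using hξne, by simp⟩
        exact Or.inr ⟨x, ξ - ξ', sub_ne_zero.mpr hξξ', by simp [map_sub, ← hξ], rfl⟩
    · -- sumSet case
      obtain ⟨z, η₁, η₂, hη₁, hη₂, hne, heq⟩ := hsum
      obtain ⟨hz, hξ⟩ := Prod.mk.injEq .. ▸ heq
      subst hz
      obtain ⟨x', ξ₂, hS'mem, heq2⟩ := hη₂
      obtain ⟨hx2, hξ2⟩ := Prod.mk.injEq .. ▸ heq2
      subst hx2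
      have hξne : ξ ≠ 0 := by
        rintro rfl
        exact hne (by simpa using hξ.symm)
      refine Or.inr ⟨f x, ξ - ξ₂, ξ₂, ?_, hS'mem, by simpa using hξne, by simp⟩
      refine Or.inl ⟨x, ξ - ξ₂, ?_, rfl⟩
      have : dft x (ξ - ξ₂) = η₁ := by
        rw [map_sub, hξ, hξ2]; abel
      rw [this]; exact hη₁
  · exact Or.inl (Or.inl (Or.inr hNf))
end
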